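/- arXiv:2504.07923 — 6 statements merged into one kernel-verified Lean document; each statement's English description precedes it below -/
import Mathlib

section
/- There exists an equilibrium value vector, i.e. a vector v* ∈ ℝ^n with T(v*) = v*. -/
open Finset Filter

/-- The value-update map of the trading network model:
`T_i(v) = -c_i + max{ max_{j ∈ N(i)} (π_{ij} v_i + (1-π_{ij}) v_j), u_i }`. -/
noncomputable def T {n : ℕ} (N : Fin n → Finset (Fin n)) (hN : ∀ i, (N i).Nonempty)
    (c u : Fin n → ℝ) (π : Fin n → Fin n → ℝ) (v : Fin n → ℝ) (i : Fin n) : ℝ :=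
  -c i + max ((N i).sup' (hN i) fun j => π i j * v i + (1 - π i j) * v j) (u i)

/-!
Since every `π i j ∈ [0, 1]`, `T` is monotone. Every value `T v i` is at least `u i - c i`, and,
costs being positive, a constant vector lying above every `u i` is mapped below itself. Hence `T`
maps the order interval between these two vectors, a complete lattice, into itself, and the
Knaster–Tarski theorem gives a fixed point.
-/

theorem Monotone.exists_isFixedPt_of_le_of_le {α : Type*} [ConditionallyCompleteLattice α]
    {f : α → α} (hf : Monotone f) {a b : α} (hab : a ≤ b) (ha : a ≤ f a) (hb : f b ≤ b) :
    ∃ x, Function.IsFixedPt f x := by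
  have : Fact (a ≤ b) := ⟨hab⟩
  let g : Set.Icc a b →o Set.Icc a b :=
    { toFun := fun x => ⟨f x, ha.trans (hf x.2.1), (hf x.2.2).trans hb⟩
      monotone' := fun _ _ hxy => hf hxy }
  exact ⟨g.lfp, congrArg Subtype.val g.isFixedPt_lfp⟩

section ValueUpdate

variable {n : ℕ} (N : Fin n → Finset (Fin n)) (hN : ∀ i, (N i).Nonempty)
  (c u : Fin n → ℝ) (π : Fin n → Fin n → ℝ)

theorem T_monotone (hπ : ∀ i j, π i j ∈ Set.Icc (0 : ℝ) 1) : Monotone (T N hN c u π) := by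
  intro v w hvw i
  refine add_le_add le_rfl (max_le_max_right (u i) (Finset.sup'_mono_fun fun j _ => ?_))
  have hπ₀ : 0 ≤ π i j := (hπ i j).1
  have hπ₁ : 0 ≤ 1 - π i j := sub_nonneg.2 (hπ i j).2
  gcongr
  exacts [hvw i, hvw j]

theorem sub_le_T_apply (v : Fin n → ℝ) (i : Fin n) : u i - c i ≤ T N hN c u π v i := by
  rw [T, sub_eq_neg_add]
  exact add_le_add le_rfl (le_max_right _ _)

theorem T_const_le {R : ℝ} (hu : ∀ i, u i ≤ R) (hc : ∀ i, 0 ≤ c i) :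
    T N hN c u π (fun _ => R) ≤ fun _ => R := by
  intro i
  have hmix : (fun j => π i j * R + (1 - π i j) * R) = fun _ => R := by
    funext j
    ring
  simp only [T, hmix, Finset.sup'_const, max_eq_left (hu i)]
  linarith [hc i]

end ValueUpdate

theorem equilibrium_exists_general {n : ℕ}
    (N : Fin n → Finset (Fin n)) (hN : ∀ i, (N i).Nonempty)
    (c u : Fin n → ℝ) (π : Fin n → Fin n → ℝ)
    (hc : ∀ i, 0 < c i) (hπ : ∀ i j, π i j ∈ Set.Ioo (0 : ℝ) 1) :
    ∃ v : Fin n → ℝ, T N hN c u π v = v := by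
  have hu : ∀ i, u i ≤ ⨆ j, u j := le_ciSup (Finite.bddAbove_range u)
  have hlow : (fun i => u i - c i) ≤ fun _ => ⨆ j, u j := fun i =>
    (sub_le_self _ (hc i).le).trans (hu i)
  have hmono := T_monotone N hN c u π fun i j => Set.Ioo_subset_Icc_self (hπ i j)
  exact hmono.exists_isFixedPt_of_le_of_le hlow (fun i => sub_le_T_apply N hN c u π _ i)
    (T_const_le N hN c u π hu fun i => (hc i).le)

/-- Existence of an equilibrium value vector: there is a vector `v` with `T v = v`. -/
theorem equilibrium_exists {n : ℕ} (hn : 1 ≤ n)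
    (N : Fin n → Finset (Fin n)) (hN : ∀ i, (N i).Nonempty)
    (c u : Fin n → ℝ) (π : Fin n → Fin n → ℝ)
    (hc : ∀ i, 0 < c i) (hπ : ∀ i j, π i j ∈ Set.Ioo (0 : ℝ) 1) :
    ∃ v : Fin n → ℝ, T N hN c u π v = v :=
  equilibrium_exists_general N hN c u π hc hπ
end

section
/- The equilibrium value vector is unique: if v and w are both vectors in ℝ^n satisfying T(v) = v and T(w) = w, then v = w. -/
open Finset Filter

/-! Uniqueness follows from a comparison principle: a subsolution `v ≤ T v` lies below every
supersolution `T w ≤ w`. If `v - w` had a positive maximum, take a maximiser `i` with `v i`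
largest among maximisers. The outside option `u i` cannot be active for `v` at `i`, so
`v i ≤ -c i + π i j * v i + (1 - π i j) * v j` for some `j`; as `1 - π i j > 0` and `c i > 0`,
`j` is another maximiser with `v j > v i`. -/

theorem Finite.forall_le_of_lt_imp_exists_le_lt {ι α β : Type*} [Finite ι] [LinearOrder α]
    [LinearOrder β] (a : α) (d : ι → α) (g : ι → β)
    (h : ∀ i, a < d i → ∃ j, d i ≤ d j ∧ g i < g j) (i : ι) : d i ≤ a := by
  by_contra! hi
  have : Nonempty ι := ⟨i⟩
  obtain ⟨k, hk⟩ := Finite.exists_max fun i => toLex (d i, g i)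
  have hdk : d i ≤ d k := (Prod.Lex.le_iff.1 (hk i)).elim le_of_lt (fun h => h.1.le)
  obtain ⟨j, hdj, hgj⟩ := h k (hi.trans_le hdk)
  exact (hk j).not_gt (Prod.Lex.lt_iff.2 (hdj.lt_or_eq.imp id fun heq => ⟨heq, hgj⟩))

section Comparison

variable {n : ℕ} {N : Fin n → Finset (Fin n)} {hN : ∀ i, (N i).Nonempty}
  {c u : Fin n → ℝ} {π : Fin n → Fin n → ℝ}

theorem T_le_iff {v : Fin n → ℝ} {i : Fin n} {a : ℝ} :
    T N hN c u π v i ≤ a ↔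
      (∀ j ∈ N i, -c i + (π i j * v i + (1 - π i j) * v j) ≤ a) ∧ -c i + u i ≤ a := by
  simp only [T, ← le_sub_iff_add_le', max_le_iff, Finset.sup'_le_iff]

theorem le_T_iff {v : Fin n → ℝ} {i : Fin n} {a : ℝ} :
    a ≤ T N hN c u π v i ↔
      (∃ j ∈ N i, a ≤ -c i + (π i j * v i + (1 - π i j) * v j)) ∨ a ≤ -c i + u i := by
  simp only [T, ← sub_le_iff_le_add', le_max_iff, Finset.le_sup'_iff]

theorem exists_sub_le_sub_and_lt_of_le_T_of_T_le (hc : ∀ i, 0 < c i) (hπ : ∀ i j, π i j < 1)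
    {v w : Fin n → ℝ} (hv : v ≤ T N hN c u π v) (hw : T N hN c u π w ≤ w) (i : Fin n)
    (hi : 0 < v i - w i) : ∃ j, v i - w i ≤ v j - w j ∧ v i < v j := by
  obtain ⟨hw_trade, hw_outside⟩ := T_le_iff.1 (hw i)
  rcases le_T_iff.1 (hv i) with ⟨j, hj, hv_trade⟩ | hv_outside
  · have hw_trade := hw_trade j hj
    have hπ' : 0 < 1 - π i j := sub_pos.2 (hπ i j)
    refine ⟨j, le_of_mul_le_mul_left ?_ hπ', lt_of_mul_lt_mul_left ?_ hπ'.le⟩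
    · linarith
    · linarith [hc i]
  · linarith

theorem le_of_le_T_of_T_le (hc : ∀ i, 0 < c i) (hπ : ∀ i j, π i j < 1)
    {v w : Fin n → ℝ} (hv : v ≤ T N hN c u π v) (hw : T N hN c u π w ≤ w) : v ≤ w := fun i =>
  sub_nonpos.1 <| Finite.forall_le_of_lt_imp_exists_le_lt 0 (v - w) v
    (exists_sub_le_sub_and_lt_of_le_T_of_T_le hc hπ hv hw) i

end Comparison

theorem equilibrium_unique_general {n : ℕ}
    (N : Fin n → Finset (Fin n)) (hN : ∀ i, (N i).Nonempty)
    (c u : Fin n → ℝ) (π : Fin n → Fin n → ℝ)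
    (hc : ∀ i, 0 < c i) (hπ : ∀ i j, π i j ∈ Set.Ioo (0 : ℝ) 1)
    (v w : Fin n → ℝ) (hv : T N hN c u π v = v) (hw : T N hN c u π w = w) :
    v = w := by
  have hπ_lt_one : ∀ i j, π i j < 1 := fun i j => (hπ i j).2
  exact le_antisymm (le_of_le_T_of_T_le hc hπ_lt_one hv.ge hw.le)
    (le_of_le_T_of_T_le hc hπ_lt_one hw.ge hv.le)

/-- Uniqueness of the equilibrium value vector. -/
theorem equilibrium_unique {n : ℕ} (hn : 1 ≤ n)
    (N : Fin n → Finset (Fin n)) (hN : ∀ i, (N i).Nonempty)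
    (c u : Fin n → ℝ) (π : Fin n → Fin n → ℝ)
    (hc : ∀ i, 0 < c i) (hπ : ∀ i j, π i j ∈ Set.Ioo (0 : ℝ) 1)
    (v w : Fin n → ℝ) (hv : T N hN c u π v = v) (hw : T N hN c u π w = w) :
    v = w :=
  equilibrium_unique_general N hN c u π hc hπ v w hv hw
end

section
/- For every starting vector v⁽⁰⁾ ∈ ℝ^n, the sequence of iterates v⁽ᵐ⁾ = T(v⁽ᵐ⁻¹⁾) (m ≥ 1) converges (in the sup norm on ℝ^n) to the unique equilibrium value vector v* satisfying T(v*) = v*. -/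
open Finset Filter

/-!
`T` is monotone and satisfies `T (v + t) ≤ T v + t` for constants `t ≥ 0`, so it is
nonexpansive for the sup norm, but it is not a contraction. Existence: the iterates of a large
constant vector decrease to a fixed point. Uniqueness: if `v, w` are fixed points and `v - w`
attains its positive maximum `δ` at `i`, then `i` must trade with some `j` at which `v - w`
is again `δ`, and since trading costs `c_i > 0` we get `v_j > v_i`; choosing `i` with `v_i`
maximal among such indices is absurd. Convergence: `v⁰` lies between `v* - t` and `v* + t`
with `t = ‖v⁰ - v*‖`, whose iterates are monotone and hence converge to a fixed point,
that is to `v*`.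
-/

open Function Topology

section MonotoneIteration

variable {α : Type*} [ConditionallyCompleteLattice α] [TopologicalSpace α] [T2Space α]
  {f : α → α}

theorem Monotone.exists_isFixedPt_tendsto_iterate_of_map_le [InfConvergenceClass α]
    (hf : Monotone f) (hfc : Continuous f) {a x : α} (ha : a ≤ f a) (hax : a ≤ x)
    (hx : f x ≤ x) : ∃ y, IsFixedPt f y ∧ Tendsto (fun m => f^[m] x) atTop (𝓝 y) := by
  have hbdd : BddBelow (Set.range fun m => f^[m] x) :=
    ⟨a, by
      rintro _ ⟨m, rfl⟩
      exact (hf.monotone_iterate_of_le_map ha (Nat.zero_le m)).trans (hf.iterate m hax)⟩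
  have hlim := tendsto_atTop_ciInf (hf.antitone_iterate_of_map_le hx) hbdd
  exact ⟨_, isFixedPt_of_tendsto_iterate hlim hfc.continuousAt, hlim⟩

theorem Monotone.exists_isFixedPt_tendsto_iterate_of_le_map [SupConvergenceClass α]
    (hf : Monotone f) (hfc : Continuous f) {b x : α} (hb : f b ≤ b) (hxb : x ≤ b)
    (hx : x ≤ f x) : ∃ y, IsFixedPt f y ∧ Tendsto (fun m => f^[m] x) atTop (𝓝 y) := by
  have hbdd : BddAbove (Set.range fun m => f^[m] x) :=
    ⟨b, by
      rintro _ ⟨m, rfl⟩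
      exact (hf.iterate m hxb).trans (hf.antitone_iterate_of_map_le hb (Nat.zero_le m))⟩
  have hlim := tendsto_atTop_ciSup (hf.monotone_iterate_of_le_map hx) hbdd
  exact ⟨_, isFixedPt_of_tendsto_iterate hlim hfc.continuousAt, hlim⟩

end MonotoneIteration

theorem Monotone.tendsto_iterate_of_le_of_le {ι : Type*} {f : (ι → ℝ) → ι → ℝ}
    (hf : Monotone f) {lo x hi p : ι → ℝ} (hlo : lo ≤ x) (hhi : x ≤ hi)
    (hlo_lim : Tendsto (fun m => f^[m] lo) atTop (𝓝 p))
    (hhi_lim : Tendsto (fun m => f^[m] hi) atTop (𝓝 p)) :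
    Tendsto (fun m => f^[m] x) atTop (𝓝 p) :=
  tendsto_pi_nhds.2 fun i =>
    tendsto_of_tendsto_of_tendsto_of_le_of_le (tendsto_pi_nhds.1 hlo_lim i)
      (tendsto_pi_nhds.1 hhi_lim i) (fun m => hf.iterate m hlo i) (fun m => hf.iterate m hhi i)

theorem Monotone.tendsto_iterate_of_forall_isFixedPt_eq {ι : Type*} [Fintype ι]
    {f : (ι → ℝ) → ι → ℝ} (hf : Monotone f) (hfc : Continuous f)
    (hadd : ∀ v (t : ℝ), 0 ≤ t → f (v + fun _ => t) ≤ f v + fun _ => t)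
    {p : ι → ℝ} (hp : IsFixedPt f p) (huniq : ∀ q, IsFixedPt f q → q = p) (x : ι → ℝ) :
    Tendsto (fun m => f^[m] x) atTop (𝓝 p) := by
  set t := ‖x - p‖
  have ht : 0 ≤ t := norm_nonneg _
  have hdist : ∀ i, |x i - p i| ≤ t := fun i => by simpa using norm_le_pi_norm (x - p) i
  have hhi : f (p + fun _ => t) ≤ p + fun _ => t :=
    calc f (p + fun _ => t) ≤ f p + fun _ => t := hadd p t ht
      _ = p + fun _ => t := by rw [hp.eq]
  have hlo : p - (fun _ => t) ≤ f (p - fun _ => t) :=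
    calc p - (fun _ => t) = f ((p - fun _ => t) + fun _ => t) - fun _ => t := by
          rw [sub_add_cancel, hp.eq]
      _ ≤ f (p - fun _ => t) := sub_le_iff_le_add.2 (hadd _ t ht)
  obtain ⟨pₕ, hpₕ, hlimₕ⟩ := hf.exists_isFixedPt_tendsto_iterate_of_map_le hfc
    hp.ge (le_add_of_nonneg_right fun _ => ht) hhi
  obtain ⟨pₗ, hpₗ, hlimₗ⟩ := hf.exists_isFixedPt_tendsto_iterate_of_le_map hfc
    hp.le (sub_le_self _ fun _ => ht) hlo
  rw [huniq pₗ hpₗ] at hlimₗ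
  rw [huniq pₕ hpₕ] at hlimₕ
  refine hf.tendsto_iterate_of_le_of_le (fun i => ?_) (fun i => ?_) hlimₗ hlimₕ
  · have := (abs_le.1 (hdist i)).1
    simp only [Pi.sub_apply]
    linarith
  · have := (abs_le.1 (hdist i)).2
    simp only [Pi.add_apply]
    linarith

namespace T

variable {n : ℕ} {N : Fin n → Finset (Fin n)} {hN : ∀ i, (N i).Nonempty}
  {c u : Fin n → ℝ} {π : Fin n → Fin n → ℝ}

theorem monotone (hπ : ∀ i j, π i j ∈ Set.Icc (0 : ℝ) 1) : Monotone (T N hN c u π) := by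
  intro v w hvw i
  simp only [T]
  gcongr with j
  · exact (hπ i j).1
  · exact hvw i
  · exact sub_nonneg.2 (hπ i j).2
  · exact hvw j

theorem continuous : Continuous (T N hN c u π) :=
  continuous_pi fun i => continuous_const.add <|
    (Continuous.finset_sup'_apply (hN i) fun j _ =>
      (continuous_const.mul (continuous_apply i)).add
        (continuous_const.mul (continuous_apply j))).max continuous_const

theorem sub_le_apply (v : Fin n → ℝ) (i : Fin n) : u i - c i ≤ T N hN c u π v i := by
  have := le_max_right ((N i).sup' (hN i) fun j => π i j * v i + (1 - π i j) * v j) (u i)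
  simp only [T]
  linarith

theorem apply_add_const_le (v : Fin n → ℝ) {t : ℝ} (ht : 0 ≤ t) :
    T N hN c u π (v + fun _ => t) ≤ T N hN c u π v + fun _ => t := by
  intro i
  have hsup : ((N i).sup' (hN i) fun j => π i j * (v i + t) + (1 - π i j) * (v j + t)) ≤
      ((N i).sup' (hN i) fun j => π i j * v i + (1 - π i j) * v j) + t :=
    sup'_le _ _ fun j hj => by
      have := le_sup' (fun j => π i j * v i + (1 - π i j) * v j) hj
      linarith
  simp only [T, Pi.add_apply]
  have := le_max_left ((N i).sup' (hN i) fun j => π i j * v i + (1 - π i j) * v j) (u i)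
  have := le_max_right ((N i).sup' (hN i) fun j => π i j * v i + (1 - π i j) * v j) (u i)
  have : max ((N i).sup' (hN i) fun j => π i j * (v i + t) + (1 - π i j) * (v j + t)) (u i) ≤
      max ((N i).sup' (hN i) fun j => π i j * v i + (1 - π i j) * v j) (u i) + t :=
    max_le (by linarith) (by linarith)
  linarith

theorem apply_const_le (hc : ∀ i, 0 ≤ c i) {M : ℝ} (hu : ∀ i, u i ≤ M) :
    T N hN c u π (fun _ => M) ≤ fun _ => M := by
  intro i
  have hconst : ∀ j, π i j * M + (1 - π i j) * M = M := fun j => by ring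
  simp only [T, hconst, sup'_const, max_eq_left (hu i)]
  linarith [hc i]

theorem exists_sub_eq_and_lt_of_isFixedPt (hc : ∀ i, 0 < c i) (hπ : ∀ i j, π i j < 1)
    {v w : Fin n → ℝ} (hv : IsFixedPt (T N hN c u π) v) (hw : IsFixedPt (T N hN c u π) w)
    {δ : ℝ} (hδ : 0 < δ) (hle : ∀ j, v j - w j ≤ δ) {i : Fin n} (hi : v i - w i = δ) :
    ∃ j, v j - w j = δ ∧ v i < v j := by
  obtain ⟨j, hj, hAv⟩ := exists_mem_eq_sup' (hN i) fun j => π i j * v i + (1 - π i j) * v j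
  have hAw := le_sup' (fun j => π i j * w i + (1 - π i j) * w j) hj
  have hvi : v i = T N hN c u π v i := (congrFun hv i).symm
  have hwi : w i = T N hN c u π w i := (congrFun hw i).symm
  have hwu : u i - c i ≤ w i := hwi ▸ sub_le_apply w i
  simp only [T] at hvi hwi
  rw [hAv] at hvi
  have hwi' : -c i + (π i j * w i + (1 - π i j) * w j) ≤ w i := by
    linarith [le_max_left ((N i).sup' (hN i) fun j => π i j * w i + (1 - π i j) * w j) (u i)]
  -- `i` is trading at `v`: were its maximum `u i`, then `v i = u i - c i ≤ w i`.
  have htrade : v i = -c i + (π i j * v i + (1 - π i j) * v j) := by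
    rcases max_cases (π i j * v i + (1 - π i j) * v j) (u i) with ⟨h, _⟩ | ⟨h, _⟩
    · rwa [h] at hvi
    · rw [h] at hvi; linarith
  have hπij : 0 < 1 - π i j := sub_pos.2 (hπ i j)
  have hj_max : δ ≤ v j - w j := le_of_mul_le_mul_left (by nlinarith) hπij
  refine ⟨j, le_antisymm (hle j) hj_max, ?_⟩
  nlinarith [hc i]

theorem le_of_isFixedPt (hc : ∀ i, 0 < c i) (hπ : ∀ i j, π i j < 1)
    {v w : Fin n → ℝ} (hv : IsFixedPt (T N hN c u π) v) (hw : IsFixedPt (T N hN c u π) w) :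
    v ≤ w := by
  by_contra hvw
  obtain ⟨i₀, hi₀⟩ : ∃ i, w i < v i := by simpa [Pi.le_def] using hvw
  have huniv : (univ : Finset (Fin n)).Nonempty := ⟨i₀, mem_univ i₀⟩
  set δ := univ.sup' huniv fun i => v i - w i
  have hle : ∀ j, v j - w j ≤ δ := fun j => le_sup' (fun i => v i - w i) (mem_univ j)
  have hδ : 0 < δ := by linarith [hle i₀]
  obtain ⟨i₁, -, hi₁⟩ := exists_mem_eq_sup' huniv fun i => v i - w i
  obtain ⟨i, hi, hmax⟩ := (univ.filter fun i => v i - w i = δ).exists_max_image v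
    ⟨i₁, by simp [hi₁, δ]⟩
  obtain ⟨j, hj, hij⟩ := exists_sub_eq_and_lt_of_isFixedPt hc hπ hv hw hδ hle (mem_filter.1 hi).2
  exact (hmax j (by simp [hj])).not_gt hij

end T

theorem iterates_converge_to_unique_equilibrium_general {n : ℕ}
    (N : Fin n → Finset (Fin n)) (hN : ∀ i, (N i).Nonempty)
    (c u : Fin n → ℝ) (π : Fin n → Fin n → ℝ)
    (hc : ∀ i, 0 < c i) (hπ : ∀ i j, π i j ∈ Set.Ioo (0 : ℝ) 1) :
    ∃ vstar : Fin n → ℝ, T N hN c u π vstar = vstar ∧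
      (∀ w : Fin n → ℝ, T N hN c u π w = w → w = vstar) ∧
      ∀ v0 : Fin n → ℝ,
        Tendsto (fun m => (T N hN c u π)^[m] v0) atTop (nhds vstar) := by
  have hmono : Monotone (T N hN c u π) := T.monotone fun i j => Set.Ioo_subset_Icc_self (hπ i j)
  obtain ⟨M, hM⟩ := Finite.bddAbove_range u
  obtain ⟨vstar, hfix, -⟩ := hmono.exists_isFixedPt_tendsto_iterate_of_map_le T.continuous
    (fun i => T.sub_le_apply (u - c) i) (fun i => by linarith [hc i, hM ⟨i, rfl⟩])
    (T.apply_const_le (fun i => (hc i).le) fun i => hM ⟨i, rfl⟩)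
  have huniq : ∀ w, IsFixedPt (T N hN c u π) w → w = vstar := fun w hw =>
    le_antisymm (T.le_of_isFixedPt hc (fun i j => (hπ i j).2) hw hfix)
      (T.le_of_isFixedPt hc (fun i j => (hπ i j).2) hfix hw)
  exact ⟨vstar, hfix, huniq, hmono.tendsto_iterate_of_forall_isFixedPt_eq T.continuous
    (fun v _ ht => T.apply_add_const_le v ht) hfix huniq⟩

/-- From any starting vector, the iterates of `T` converge (in the sup norm on
`ℝ^n`, which is the norm of the Pi type `Fin n → ℝ`) to the unique equilibrium
value vector. -/
theorem iterates_converge_to_unique_equilibrium {n : ℕ} (hn : 1 ≤ n)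
    (N : Fin n → Finset (Fin n)) (hN : ∀ i, (N i).Nonempty)
    (c u : Fin n → ℝ) (π : Fin n → Fin n → ℝ)
    (hc : ∀ i, 0 < c i) (hπ : ∀ i j, π i j ∈ Set.Ioo (0 : ℝ) 1) :
    ∃ vstar : Fin n → ℝ, T N hN c u π vstar = vstar ∧
      (∀ w : Fin n → ℝ, T N hN c u π w = w → w = vstar) ∧
      ∀ v0 : Fin n → ℝ,
        Tendsto (fun m => (T N hN c u π)^[m] v0) atTop (nhds vstar) :=
  iterates_converge_to_unique_equilibrium_general N hN c u π hc hπ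
end

section
/- Every equilibrium value vector v* satisfies max_{i} v*_i = max_{i} (u_i − c_i), where both maxima range over all dealers i ∈ {1,…,n}. -/
open Finset Filter

/-- The maximum equilibrium value equals the maximum outside-option value:
`max_i v i = max_i (u i - c i)`. -/
theorem equilibrium_max_eq {n : ℕ} (hn : 1 ≤ n)
    (N : Fin n → Finset (Fin n)) (hN : ∀ i, (N i).Nonempty)
    (c u : Fin n → ℝ) (π : Fin n → Fin n → ℝ)
    (hc : ∀ i, 0 < c i) (hπ : ∀ i j, π i j ∈ Set.Ioo (0 : ℝ) 1)
    (hne : (Finset.univ : Finset (Fin n)).Nonempty)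
    (v : Fin n → ℝ) (hv : T N hN c u π v = v) :
    Finset.univ.sup' hne v = Finset.univ.sup' hne (fun i => u i - c i) := by
  have hvi : ∀ i, v i = -c i +
      max ((N i).sup' (hN i) fun j => π i j * v i + (1 - π i j) * v j) (u i) := by
    intro i
    conv_lhs => rw [← hv]
    rfl
  apply le_antisymm
  · -- max v ≤ max (u - c)
    obtain ⟨i, _, hi⟩ := Finset.exists_mem_eq_sup' hne v
    rw [hi]
    have hmax : ∀ j, v j ≤ v i := by
      intro j
      rw [← hi]; exact Finset.le_sup' v (Finset.mem_univ j)
    have hS : ((N i).sup' (hN i) fun j => π i j * v i + (1 - π i j) * v j) ≤ v i := by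
      apply Finset.sup'_le
      intro j _
      have h1 := (hπ i j).1
      have h2 := (hπ i j).2
      nlinarith [hmax j]
    have hui : v i ≤ u i - c i := by
      have := hvi i
      rcases max_cases ((N i).sup' (hN i) fun j => π i j * v i + (1 - π i j) * v j) (u i) with
        ⟨he, _⟩ | ⟨he, _⟩ <;> rw [he] at this <;> [skip; linarith] 
      · have := hc i; linarith
    calc v i ≤ u i - c i := hui
      _ ≤ _ := Finset.le_sup' (fun j => u j - c j) (Finset.mem_univ i)
  · -- max (u-c) ≤ max v
    apply Finset.sup'_le
    intro i _
    have : u i - c i ≤ v i := by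
      have := hvi i
      have := le_max_right ((N i).sup' (hN i) fun j => π i j * v i + (1 - π i j) * v j) (u i)
      linarith
    calc u i - c i ≤ v i := this
      _ ≤ _ := Finset.le_sup' v (Finset.mem_univ i)
end

section
/- If v* is an equilibrium value vector and dealer i attains the maximum equilibrium value, i.e. v*_i = max_{k} v*_k, then dealer i takes the outside option: v*_i = u_i − c_i. -/
open Finset Filter

/-- A dealer attaining the maximum equilibrium value takes the outside option:
`v i = u i - c i`. -/
theorem max_value_dealer_takes_outside_option {n : ℕ} (hn : 1 ≤ n)
    (N : Fin n → Finset (Fin n)) (hN : ∀ i, (N i).Nonempty)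
    (c u : Fin n → ℝ) (π : Fin n → Fin n → ℝ)
    (hc : ∀ i, 0 < c i) (hπ : ∀ i j, π i j ∈ Set.Ioo (0 : ℝ) 1)
    (hne : (Finset.univ : Finset (Fin n)).Nonempty)
    (v : Fin n → ℝ) (hv : T N hN c u π v = v)
    (i : Fin n) (hi : v i = Finset.univ.sup' hne v) :
    v i = u i - c i := by
  have hmax : ∀ k, v k ≤ v i := by
    intro k
    rw [hi]
    exact le_sup' v (mem_univ k)
  have hsup : ((N i).sup' (hN i) fun j => π i j * v i + (1 - π i j) * v j) ≤ v i := by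
    apply sup'_le
    intro j _
    have h1 := (hπ i j).1
    have h2 := (hπ i j).2
    nlinarith [hmax j]
  have hvi : -c i + max ((N i).sup' (hN i) fun j => π i j * v i + (1 - π i j) * v j) (u i)
      = v i := congrFun hv i
  rcases max_cases ((N i).sup' (hN i) fun j => π i j * v i + (1 - π i j) * v j) (u i) with
    ⟨h, h'⟩ | ⟨h, h'⟩
  · rw [h] at hvi
    have := hc i
    linarith
  · rw [h] at hvi
    linarith
end

section
/- At every equilibrium value vector v*, at least one dealer sells to its customers rather than to another dealer: there exists an index i with v*_i = u_i − c_i. -/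
open Finset Filter

/-- At every equilibrium, at least one dealer sells to its customers:
there is an index `i` with `v i = u i - c i`. -/
theorem exists_dealer_selling_to_customers {n : ℕ} (hn : 1 ≤ n)
    (N : Fin n → Finset (Fin n)) (hN : ∀ i, (N i).Nonempty)
    (c u : Fin n → ℝ) (π : Fin n → Fin n → ℝ)
    (hc : ∀ i, 0 < c i) (hπ : ∀ i j, π i j ∈ Set.Ioo (0 : ℝ) 1)
    (v : Fin n → ℝ) (hv : T N hN c u π v = v) :
    ∃ i, v i = u i - c i := by
  haveI : Nonempty (Fin n) := ⟨⟨0, hn⟩⟩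
  obtain ⟨i, hi⟩ := Finite.exists_max v
  refine ⟨i, ?_⟩
  have hfix : T N hN c u π v i = v i := congrFun hv i
  unfold T at hfix
  set M := (N i).sup' (hN i) fun j => π i j * v i + (1 - π i j) * v j with hM
  have hsup : M ≤ v i := by
    apply Finset.sup'_le
    intro j hj
    have h1 := (hπ i j).1
    have h2 := (hπ i j).2
    nlinarith [hi j]
  have hlt : v i < u i := by
    by_contra h
    push_neg at h
    have hm : max M (u i) ≤ v i := max_le hsup h
    have := hc i
    linarith
  have hmax : max M (u i) = u i := max_eq_right (hsup.trans hlt.le)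
  rw [hmax] at hfix
  linarith
end
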